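/- arXiv:1711.10654 — 13 statements merged into one kernel-verified Lean document; each statement's English description precedes it below -/
import Mathlib

section
/- Let φ: ℝ → [0,∞) be convex and let Q_{η₁,η₂}(α) = η₁·φ(α) + η₂·φ(-α) for η₁, η₂ ≥ 0. If φ is differentiable at 0 with φ'(0) < 0, then for any η₁ > η₂ ≥ 0, every minimizer α* of Q_{η₁,η₂} satisfies α* > 0. -/
/-- If a nonnegative convex surrogate loss `φ` is differentiable at `0` with `φ'(0) < 0`,
then for any `η₁ > η₂ ≥ 0`, every minimizer of the conditional φ-risk
`Q_{η₁,η₂}(α) = η₁ φ(α) + η₂ φ(-α)` is strictly positive. -/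
theorem stmt_0 (φ : ℝ → ℝ) (hφ0 : ∀ u, 0 ≤ φ u)
    (hconv : ConvexOn ℝ Set.univ φ)
    (φ' : ℝ) (hdiff : HasDerivAt φ φ' 0) (hneg : φ' < 0)
    (η₁ η₂ : ℝ) (hη₂ : 0 ≤ η₂) (hlt : η₂ < η₁)
    (α : ℝ) (hmin : ∀ β : ℝ, η₁ * φ α + η₂ * φ (-α) ≤ η₁ * φ β + η₂ * φ (-β)) :
    0 < α := by
  set Q : ℝ → ℝ := fun x => η₁ * φ x + η₂ * φ (-x) with hQdef
  have hη₁ : (0:ℝ) < η₁ := lt_of_le_of_lt hη₂ hlt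
  -- Q is convex
  have hconvneg : ConvexOn ℝ Set.univ (fun x => φ (-x)) := by
    refine ⟨convex_univ, fun x _ y _ a b ha hb hab => ?_⟩
    have := hconv.2 (Set.mem_univ (-x)) (Set.mem_univ (-y)) ha hb hab
    simpa [neg_add, smul_neg, add_comm] using this
  have hQconv : ConvexOn ℝ Set.univ Q := by
    have h1 : ConvexOn ℝ Set.univ (fun x => η₁ * φ x) := by
      simpa [smul_eq_mul] using hconv.smul hη₁.le
    have h2 : ConvexOn ℝ Set.univ (fun x => η₂ * φ (-x)) := by
      simpa [smul_eq_mul] using hconvneg.smul hη₂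
    exact h1.add h2
  -- Q has negative derivative at 0
  have hQderiv : HasDerivAt Q (η₁ * φ' + η₂ * (φ' * (-1))) 0 := by
    have hneg0 : HasDerivAt (fun x : ℝ => -x) (-1 : ℝ) 0 := (hasDerivAt_id 0).neg
    have hcomp : HasDerivAt (fun x : ℝ => φ (-x)) (φ' * (-1)) 0 := by
      have : HasDerivAt φ φ' (-(0:ℝ)) := by simpa using hdiff
      exact this.comp 0 hneg0
    exact (hdiff.const_mul η₁).add (hcomp.const_mul η₂)
  have hq' : η₁ * φ' + η₂ * (φ' * (-1)) < 0 := by nlinarith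
  -- obtain t > 0 with Q t < Q 0
  have hslope : Filter.Tendsto (slope Q 0) (nhdsWithin 0 {(0:ℝ)}ᶜ)
      (nhds (η₁ * φ' + η₂ * (φ' * (-1)))) := hasDerivAt_iff_tendsto_slope.mp hQderiv
  have hev : ∀ᶠ t in nhdsWithin 0 {(0:ℝ)}ᶜ, slope Q 0 t < 0 :=
    hslope.eventually (Filter.Tendsto.eventually_lt_const hq' Filter.tendsto_id)
  have hev' : ∀ᶠ t in nhdsWithin (0:ℝ) (Set.Ioi 0), slope Q 0 t < 0 :=
    hev.filter_mono (nhdsWithin_mono 0 (fun x hx => ne_of_gt hx))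
  obtain ⟨t, ht, hts⟩ := (hev'.and self_mem_nhdsWithin).exists
  have ht0 : 0 < t := hts
  have hQt : Q t < Q 0 := by
    have : (Q t - Q 0) / t < 0 := by
      simpa [slope_def_field, div_eq_iff, sub_zero] using ht
    have := (div_neg_iff.mp this)
    rcases this with ⟨h1, h2⟩ | ⟨h1, h2⟩
    · linarith
    · linarith
  -- now derive 0 < α
  by_contra hle
  push_neg at hle
  have hseg : (0:ℝ) ∈ segment ℝ α t := by
    rw [segment_eq_Icc (le_trans hle ht0.le)]
    exact ⟨hle, ht0.le⟩
  have h0le : Q 0 ≤ max (Q α) (Q t) :=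
    hQconv.le_on_segment (Set.mem_univ α) (Set.mem_univ t) hseg
  have hαt : Q α ≤ Q t := hmin t
  have : Q 0 ≤ Q t := h0le.trans (max_le hαt le_rfl)
  linarith
end

section
/- Let φ: ℝ → [0,∞) be convex and suppose that for all η₁, η₂ ≥ 0 with η₁ > η₂, every minimizer of Q_{η₁,η₂}(α) = η₁·φ(α) + η₂·φ(-α) is strictly positive (and symmetrically strictly negative when η₁ < η₂). Then φ is differentiable at 0 and φ'(0) < 0. -/
open Set Filter

/-- If a nonnegative convex loss `φ` satisfies the Fisher consistency condition that every
minimizer of `Q_{η₁,η₂}(α) = η₁ φ(α) + η₂ φ(-α)` is strictly positive when `η₁ > η₂ ≥ 0`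
(and strictly negative when `η₂ > η₁ ≥ 0`), then `φ` is differentiable at `0` with
negative derivative. -/
theorem stmt_1 (φ : ℝ → ℝ) (hφ0 : ∀ u, 0 ≤ φ u)
    (hconv : ConvexOn ℝ Set.univ φ)
    (hpos : ∀ η₁ η₂ : ℝ, 0 ≤ η₂ → η₂ < η₁ → ∀ α : ℝ,
      (∀ β : ℝ, η₁ * φ α + η₂ * φ (-α) ≤ η₁ * φ β + η₂ * φ (-β)) → 0 < α)
    (hneg : ∀ η₁ η₂ : ℝ, 0 ≤ η₁ → η₁ < η₂ → ∀ α : ℝ,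
      (∀ β : ℝ, η₁ * φ α + η₂ * φ (-α) ≤ η₁ * φ β + η₂ * φ (-β)) → α < 0) :
    ∃ c : ℝ, c < 0 ∧ HasDerivAt φ c 0 := by
  set g : ℝ → ℝ := slope φ 0 with hg
  have gdef : ∀ x : ℝ, g x = (φ x - φ 0) / x := by
    intro x; simp [hg, slope_def_field]
  have gmono : ∀ {x y : ℝ}, x ≠ 0 → y ≠ 0 → x ≤ y → g x ≤ g y := by
    intro x y hx hy hxy
    have := hconv.secant_mono (Set.mem_univ 0) (Set.mem_univ x) (Set.mem_univ y) hx hy hxy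
    simpa [gdef, sub_zero] using this
  set A : ℝ := sSup (g '' Iio 0) with hA
  set B : ℝ := sInf (g '' Ioi 0) with hB
  have hbddA : BddAbove (g '' Iio 0) := by
    refine ⟨g 1, ?_⟩
    rintro z ⟨x, hx, rfl⟩
    exact gmono (ne_of_lt hx) one_ne_zero (le_of_lt (lt_trans hx one_pos))
  have hbddB : BddBelow (g '' Ioi 0) := by
    refine ⟨g (-1), ?_⟩
    rintro z ⟨x, hx, rfl⟩
    exact gmono (by norm_num) (ne_of_gt hx) (by linarith [mem_Ioi.mp hx])
  have hneA : (g '' Iio 0).Nonempty := ⟨g (-1), ⟨-1, by norm_num, rfl⟩⟩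
  have hneB : (g '' Ioi 0).Nonempty := ⟨g 1, ⟨1, by norm_num, rfl⟩⟩
  have hgA : ∀ x < (0:ℝ), g x ≤ A := fun x hx => le_csSup hbddA ⟨x, hx, rfl⟩
  have hgB : ∀ y > (0:ℝ), B ≤ g y := fun y hy => csInf_le hbddB ⟨y, hy, rfl⟩
  have hBg : ∀ x < (0:ℝ), g x ≤ B := by
    intro x hx
    refine le_csInf hneB ?_
    rintro z ⟨y, hy, rfl⟩
    exact gmono (ne_of_lt hx) (ne_of_gt hy) (le_of_lt (lt_trans hx hy))
  have hAB : A ≤ B := csSup_le hneA (by rintro z ⟨x, hx, rfl⟩; exact hBg x hx)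
  -- one-sided subgradient inequalities
  have keyA : ∀ x : ℝ, x ≤ 0 → φ 0 + A * x ≤ φ x := by
    intro x hx
    rcases eq_or_lt_of_le hx with rfl | hx'
    · simp
    · have h1 : g x ≤ A := hgA x hx'
      rw [gdef] at h1
      rw [div_le_iff_of_neg hx'] at h1
      linarith
  have keyB : ∀ x : ℝ, 0 ≤ x → φ 0 + B * x ≤ φ x := by
    intro x hx
    rcases eq_or_lt_of_le hx with rfl | hx'
    · simp
    · have h1 : B ≤ g x := hgB x hx'
      rw [gdef] at h1
      rw [le_div_iff₀ hx'] at h1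
      linarith
  -- step 1 : not (A ≤ 0 ≤ B)
  have hnot : ¬ (A ≤ 0 ∧ 0 ≤ B) := by
    rintro ⟨h1, h2⟩
    have hmin : ∀ β : ℝ, 1 * φ 0 + 0 * φ (-0) ≤ 1 * φ β + 0 * φ (-β) := by
      intro β
      rcases le_or_gt 0 β with hβ | hβ
      · have := keyB β hβ
        nlinarith [mul_nonneg h2 hβ]
      · have := keyA β hβ.le
        nlinarith [mul_nonneg (neg_nonneg.mpr h1) (neg_nonneg.mpr hβ.le)]
    exact absurd (hpos 1 0 le_rfl one_pos 0 hmin) (lt_irrefl 0)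
  -- step 2 : A ≤ 0
  have hA0 : A ≤ 0 := by
    by_contra hA'
    push_neg at hA'
    have sub : ∀ x : ℝ, φ 0 + A * x ≤ φ x := by
      intro x
      rcases le_or_gt x 0 with hx | hx
      · exact keyA x hx
      · have := keyB x hx.le
        nlinarith [mul_le_mul_of_nonneg_right hAB hx.le]
    have hcont : Continuous φ := hconv.locallyLipschitz.continuous
    set Q : ℝ → ℝ := fun α => (1/2) * φ α + 1 * φ (-α) with hQ
    have hQcont : Continuous Q := by fun_prop
    obtain ⟨R, hR0, hAR⟩ : ∃ R : ℝ, 0 < R ∧ A * R = 3 * φ 0 + A :=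
      ⟨(3 * φ 0 + A) / A, div_pos (by linarith [hφ0 0]) hA',
        by field_simp⟩
    have hout : ∀ α : ℝ, R ≤ |α| → Q 0 < Q α := by
      intro α hα
      rcases le_or_gt 0 α with h | h
      · rw [abs_of_nonneg h] at hα
        have h1 := sub α
        have h2 := hφ0 (-α)
        have h3 := hφ0 0
        have h4 : A * R ≤ A * α := mul_le_mul_of_nonneg_left hα hA'.le
        simp only [hQ, neg_zero]
        linarith
      · rw [abs_of_neg h] at hα
        have h1 := sub (-α)
        have h2 := hφ0 α
        have h3 := hφ0 0
        have h4 : A * R ≤ A * (-α) := mul_le_mul_of_nonneg_left hα hA'.le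
        simp only [hQ, neg_zero]
        linarith
    obtain ⟨α, hαK, hminK⟩ := isCompact_Icc.exists_isMinOn (s := Icc (-R) R)
      ⟨0, by constructor <;> linarith⟩ hQcont.continuousOn
    have h0K : (0:ℝ) ∈ Icc (-R) R := by constructor <;> linarith
    have hglob : ∀ β : ℝ, Q α ≤ Q β := by
      intro β
      by_cases hβ : β ∈ Icc (-R) R
      · exact hminK hβ
      · have : R ≤ |β| := by
          rw [mem_Icc, not_and_or] at hβ
          rcases hβ with h | h <;> push_neg at h
          · rw [abs_of_neg (by linarith)]; linarith
          · rw [abs_of_pos (by linarith)]; linarith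
        exact le_trans (hminK h0K) (hout β this).le
    have hαneg : α < 0 := by
      refine hneg (1/2) 1 (by norm_num) (by norm_num) α ?_
      intro β
      exact hglob β
    have h1 := sub α
    have h2 := sub (-α)
    have h3 := hglob 0
    simp only [hQ, neg_zero] at h3
    nlinarith [mul_pos hA' (neg_pos.mpr hαneg)]
  
  have hB0 : B < 0 := by
    by_contra hB'
    push_neg at hB'
    exact hnot ⟨hA0, hB'⟩
  have hA0' : A < 0 := lt_of_le_of_lt hAB hB0
  -- step 3 : A = B
  have hABeq : A = B := by
    by_contra hne
    have hAB' : A < B := lt_of_le_of_ne hAB hne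
    set t : ℝ := B / A with ht
    have ht0 : 0 < t := div_pos_of_neg_of_neg hB0 hA0'
    have htA : t * A = B := div_mul_cancel₀ _ hA0'.ne
    have ht1 : t < 1 := by nlinarith
    have hmin : ∀ β : ℝ, 1 * φ 0 + t * φ (-0) ≤ 1 * φ β + t * φ (-β) := by
      intro β
      rcases le_or_gt 0 β with hβ | hβ
      · have h1 := keyB β hβ
        have h2 := keyA (-β) (by linarith)
        have h2' : t * (φ 0 + A * (-β)) ≤ t * φ (-β) :=
          mul_le_mul_of_nonneg_left h2 ht0.le
        simp only [neg_zero]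
        nlinarith
      · have h1 := keyA β hβ.le
        have h2 := keyB (-β) (by linarith)
        have h2' : t * (φ 0 + B * (-β)) ≤ t * φ (-β) :=
          mul_le_mul_of_nonneg_left h2 ht0.le
        have hAtB : A - t * B < 0 := by nlinarith
        simp only [neg_zero]
        nlinarith [mul_pos_of_neg_of_neg hβ hAtB]
    exact absurd (hpos 1 t ht0.le ht1 0 hmin) (lt_irrefl 0)
  -- step 4 : differentiability
  refine ⟨A, hA0', ?_⟩
  rw [hasDerivAt_iff_tendsto_slope, ← nhdsLT_sup_nhdsGT, tendsto_sup]
  constructor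
  · have hm : MonotoneOn g (Iio 0) :=
      fun x hx y hy hxy => gmono (ne_of_lt hx) (ne_of_lt hy) hxy
    exact hm.tendsto_nhdsLT hbddA
  · have hm : MonotoneOn g (Ioi 0) :=
      fun x hx y hy hxy => gmono (ne_of_gt hx) (ne_of_gt hy) hxy
    have h := hm.tendsto_nhdsGT hbddB
    rwa [← hB, ← hABeq] at h
end

section
/- For the hinge loss φ(α) = max(1-α, 0) and any η₁, η₂ ∈ [0,∞), the optimal conditional risk is H(η₁,η₂) = min over α of (η₁·φ(α) + η₂·φ(-α)) = 2·min(η₁, η₂). -/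
/-- For the hinge loss `φ(α) = max (1-α) 0`, the optimal conditional risk is
`H(η₁,η₂) = inf_α (η₁ φ(α) + η₂ φ(-α)) = 2 min(η₁,η₂)`. -/
theorem stmt_2 (η₁ η₂ : ℝ) (hη₁ : 0 ≤ η₁) (hη₂ : 0 ≤ η₂) :
    IsGLB (Set.range fun α : ℝ => η₁ * max (1 - α) 0 + η₂ * max (1 - (-α)) 0)
      (2 * min η₁ η₂) := by
  constructor
  · rintro x ⟨α, rfl⟩
    simp only
    have h1 : (1 - α) ≤ max (1 - α) 0 := le_max_left _ _
    have h2 : (0:ℝ) ≤ max (1 - α) 0 := le_max_right _ _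
    have h3 : (1 - (-α)) ≤ max (1 - (-α)) 0 := le_max_left _ _
    have h4 : (0:ℝ) ≤ max (1 - (-α)) 0 := le_max_right _ _
    rcases min_le_iff.mp (le_refl (min η₁ η₂)) with _ | _ <;>
    rcases le_total η₁ η₂ with h | h
    · rw [min_eq_left h]; nlinarith
    · rw [min_eq_right h]; nlinarith
    · rw [min_eq_left h]; nlinarith
    · rw [min_eq_right h]; nlinarith
  · intro B hB
    have e1 : B ≤ 2 * η₂ := by
      have h := hB ⟨1, rfl⟩
      simp only at h
      norm_num at h
      linarith
    have e2 : B ≤ 2 * η₁ := by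
      have h := hB ⟨-1, rfl⟩
      simp only at h
      norm_num at h
      linarith
    rcases le_total η₁ η₂ with h | h
    · rw [min_eq_left h]; exact e2
    · rw [min_eq_right h]; exact e1
end

section
/- For the hinge loss φ(α) = max(1-α, 0) and any η₁, η₂ ∈ [0,∞), the excess conditional risk at zero satisfies Q_{η₁,η₂}(0) - inf_α Q_{η₁,η₂}(α) = |η₁ - η₂|. -/
/-- For the hinge loss `φ(α) = max (1-α) 0`, the excess conditional risk at zero satisfies
`Q_{η₁,η₂}(0) - inf_α Q_{η₁,η₂}(α) = |η₁ - η₂|`. -/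
theorem stmt_3 (η₁ η₂ : ℝ) (hη₁ : 0 ≤ η₁) (hη₂ : 0 ≤ η₂) (m : ℝ)
    (hm : IsGLB (Set.range fun α : ℝ => η₁ * max (1 - α) 0 + η₂ * max (1 - (-α)) 0) m) :
    (η₁ * max (1 - (0:ℝ)) 0 + η₂ * max (1 - (-(0:ℝ))) 0) - m = |η₁ - η₂| := by
  have key : IsGLB (Set.range fun α : ℝ => η₁ * max (1 - α) 0 + η₂ * max (1 - (-α)) 0)
      (2 * min η₁ η₂) := by
    constructor
    · rintro y ⟨α, rfl⟩
      simp only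
      have h1 : 1 - α ≤ max (1 - α) 0 := le_max_left _ _
      have h2 : (0:ℝ) ≤ max (1 - α) 0 := le_max_right _ _
      have h3 : 1 - (-α) ≤ max (1 - (-α)) 0 := le_max_left _ _
      have h4 : (0:ℝ) ≤ max (1 - (-α)) 0 := le_max_right _ _
      rcases le_total η₁ η₂ with h | h
      · rw [min_eq_left h]; nlinarith
      · rw [min_eq_right h]; nlinarith
    · intro b hb
      rcases le_total η₁ η₂ with h | h
      · have hb1 : b ≤ η₁ * max (1 - (-1:ℝ)) 0 + η₂ * max (1 - (-(-1:ℝ))) 0 := hb ⟨-1, rfl⟩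
        rw [min_eq_left h]
        norm_num at hb1
        linarith
      · have hb1 : b ≤ η₁ * max (1 - (1:ℝ)) 0 + η₂ * max (1 - (-(1:ℝ))) 0 := hb ⟨1, rfl⟩
        rw [min_eq_right h]
        norm_num at hb1
        linarith
  have hmeq : m = 2 * min η₁ η₂ := hm.unique key
  rw [hmeq]
  rcases le_total η₁ η₂ with h | h
  · rw [min_eq_left h, abs_of_nonpos (by linarith)]; norm_num; ring
  · rw [min_eq_right h, abs_of_nonneg (by linarith)]; norm_num; ring
end

section
/- For the squared hinge loss φ(α) = (max(1-α,0))², and any η₁, η₂ ∈ [0,∞) not both zero, the infimum of Q_{η₁,η₂}(α) = η₁·φ(α) + η₂·φ(-α) over α ∈ ℝ equals 4η₁η₂/(η₁+η₂), attained at α* = (η₁-η₂)/(η₁+η₂). -/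
/-- For the squared hinge loss `φ(α) = (max (1-α) 0)^2` and `η₁, η₂ ≥ 0` not both zero,
the infimum of `Q_{η₁,η₂}` is `4η₁η₂/(η₁+η₂)`, attained at `α* = (η₁-η₂)/(η₁+η₂)`. -/
theorem stmt_4 (η₁ η₂ : ℝ) (hη₁ : 0 ≤ η₁) (hη₂ : 0 ≤ η₂) (hne : η₁ + η₂ ≠ 0) :
    (η₁ * (max (1 - (η₁ - η₂) / (η₁ + η₂)) 0) ^ 2
        + η₂ * (max (1 - (-((η₁ - η₂) / (η₁ + η₂)))) 0) ^ 2
      = 4 * η₁ * η₂ / (η₁ + η₂)) ∧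
    ∀ α : ℝ, 4 * η₁ * η₂ / (η₁ + η₂)
      ≤ η₁ * (max (1 - α) 0) ^ 2 + η₂ * (max (1 - (-α)) 0) ^ 2 := by
  have hs : 0 < η₁ + η₂ := lt_of_le_of_ne (by linarith) (Ne.symm hne)
  constructor
  · have h1 : 1 - (η₁ - η₂) / (η₁ + η₂) = 2 * η₂ / (η₁ + η₂) := by
      field_simp; ring
    have h2 : 1 - (-((η₁ - η₂) / (η₁ + η₂))) = 2 * η₁ / (η₁ + η₂) := by
      field_simp; ring
    rw [h1, h2, max_eq_left (by positivity), max_eq_left (by positivity)]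
    field_simp
    ring
  · intro α
    set a := max (1 - α) 0 with ha
    set b := max (1 - (-α)) 0 with hb
    have ha1 : 1 - α ≤ a := le_max_left _ _
    have hb1 : 1 + α ≤ b := by have := le_max_left (1 - -α) (0:ℝ); linarith
    have ha0 : 0 ≤ a := le_max_right _ _
    have hb0 : 0 ≤ b := le_max_right _ _
    have hab : 2 ≤ a + b := by linarith
    rw [div_le_iff₀ hs]
    nlinarith [sq_nonneg (η₁ * a - η₂ * b), mul_nonneg hη₁ (mul_nonneg ha0 ha0),
      mul_nonneg hη₂ (mul_nonneg hb0 hb0), sq_nonneg (a + b - 2),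
      mul_nonneg (mul_nonneg hη₁ hη₂) (mul_nonneg (by linarith : (0:ℝ) ≤ a + b - 2) (by linarith : (0:ℝ) ≤ a + b + 2)),
      mul_nonneg (mul_nonneg hη₁ hη₂) (mul_nonneg ha0 hb0)]
end

section
/- For the squared hinge loss φ(α) = (max(1-α,0))² and any η₁, η₂ ∈ [0,∞), the identity (η₁-η₂)² = (η₁+η₂)·(Q_{η₁,η₂}(0) - inf_α Q_{η₁,η₂}(α)) holds. -/
/-- For the squared hinge loss `φ(α) = (max (1-α) 0)^2`, the comparison identity
`(η₁-η₂)² = (η₁+η₂) (Q_{η₁,η₂}(0) - inf_α Q_{η₁,η₂}(α))` holds. -/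
theorem stmt_5 (η₁ η₂ : ℝ) (hη₁ : 0 ≤ η₁) (hη₂ : 0 ≤ η₂) (m : ℝ)
    (hm : IsGLB
      (Set.range fun α : ℝ => η₁ * (max (1 - α) 0) ^ 2 + η₂ * (max (1 - (-α)) 0) ^ 2) m) :
    (η₁ - η₂) ^ 2
      = (η₁ + η₂) *
        ((η₁ * (max (1 - (0:ℝ)) 0) ^ 2 + η₂ * (max (1 - (-(0:ℝ))) 0) ^ 2) - m) := by
  rcases eq_or_lt_of_le (add_nonneg hη₁ hη₂) with hs | hs
  · -- η₁ = η₂ = 0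
    have h1 : η₁ = 0 := by linarith [abs_nonneg η₁]
    have h2 : η₂ = 0 := by linarith
    subst h1; subst h2
    have hm0 : m = 0 := by
      have hle : m ≤ 0 := by
        have := hm.1 (Set.mem_range_self 0)
        simpa using this
      have hge : 0 ≤ m := by
        apply hm.2
        rintro x ⟨α, rfl⟩
        positivity
      linarith
    simp [hm0]
  · set s := η₁ + η₂ with hsdef
    have hmval : m = 4 * η₁ * η₂ / s := by
      have hub : m ≤ 4 * η₁ * η₂ / s := by
        have hx := hm.1 (Set.mem_range_self ((η₁ - η₂) / s))
        have h1 : 1 - (η₁ - η₂) / s = 2 * η₂ / s := by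
          field_simp; ring
        have h2 : 1 - -((η₁ - η₂) / s) = 2 * η₁ / s := by
          field_simp; ring
        have hp1 : (0:ℝ) ≤ 2 * η₂ / s := by positivity
        have hp2 : (0:ℝ) ≤ 2 * η₁ / s := by positivity
        rw [h1, h2, max_eq_left hp1, max_eq_left hp2] at hx
        calc m ≤ η₁ * (2 * η₂ / s) ^ 2 + η₂ * (2 * η₁ / s) ^ 2 := hx
          _ = 4 * η₁ * η₂ / s := by field_simp; ring
      have hlb : 4 * η₁ * η₂ / s ≤ m := by
        apply hm.2
        rintro x ⟨α, rfl⟩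
        simp only
        rw [div_le_iff₀ hs]
        have ht : 1 - α ≤ max (1 - α) 0 := le_max_left _ _
        have hu : 1 - -α ≤ max (1 - -α) 0 := le_max_left _ _
        have ht0 : 0 ≤ max (1 - α) 0 := le_max_right _ _
        have hu0 : 0 ≤ max (1 - -α) 0 := le_max_right _ _
        set t := max (1 - α) 0
        set u := max (1 - -α) 0
        have htu : 2 ≤ t + u := by simp only [sub_neg_eq_add] at hu ⊢; linarith
        rw [hsdef]
        have h4 : (0:ℝ) ≤ (t + u) ^ 2 - 4 := by nlinarith
        nlinarith [sq_nonneg (η₁ * t - η₂ * u), mul_nonneg (mul_nonneg hη₁ hη₂) h4]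
      linarith
    rw [hmval]
    have : max (1 - (0:ℝ)) 0 = 1 := by norm_num
    rw [this]
    have : max (1 - -(0:ℝ)) 0 = 1 := by norm_num
    rw [this]
    field_simp
    ring
end

section
/- For the Huberized hinge loss φ (defined as 0 for u ≥ 1, (1-u)²/4 for -1 ≤ u < 1, and -u for u < -1) and any η₁, η₂ > 0, the minimum of Q_{η₁,η₂}(α) = η₁·φ(α) + η₂·φ(-α) over α ∈ ℝ equals η₁η₂/(η₁+η₂), attained at α* = (η₁-η₂)/(η₁+η₂). -/
/-- The Huberized hinge loss. -/
noncomputable def hhLoss (u : ℝ) : ℝ :=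
  if 1 ≤ u then 0 else if -1 ≤ u then (1 - u) ^ 2 / 4 else -u

/-- For the Huberized hinge loss and any `η₁, η₂ > 0`, the minimum of
`Q_{η₁,η₂}(α) = η₁ φ(α) + η₂ φ(-α)` is `η₁η₂/(η₁+η₂)`, attained at
`α* = (η₁-η₂)/(η₁+η₂)`. -/
theorem stmt_7 (η₁ η₂ : ℝ) (hη₁ : 0 < η₁) (hη₂ : 0 < η₂) :
    (η₁ * hhLoss ((η₁ - η₂) / (η₁ + η₂)) + η₂ * hhLoss (-((η₁ - η₂) / (η₁ + η₂)))
      = η₁ * η₂ / (η₁ + η₂)) ∧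
    ∀ α : ℝ, η₁ * η₂ / (η₁ + η₂) ≤ η₁ * hhLoss α + η₂ * hhLoss (-α) := by
  have hs : 0 < η₁ + η₂ := by linarith
  constructor
  · set t := (η₁ - η₂) / (η₁ + η₂) with ht
    have h1 : t < 1 := by rw [ht, div_lt_one hs]; linarith
    have h2 : -1 < t := by rw [ht, lt_div_iff₀ hs]; linarith
    have e1 : hhLoss t = (1 - t) ^ 2 / 4 := by
      unfold hhLoss; rw [if_neg (by linarith), if_pos (by linarith)]
    have e2 : hhLoss (-t) = (1 + t) ^ 2 / 4 := by
      unfold hhLoss; rw [if_neg (by linarith), if_pos (by linarith)]; ring_nf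
    rw [e1, e2, ht]
    field_simp
    ring
  · intro α
    rcases lt_or_ge α (-1) with h | h
    · have e1 : hhLoss α = -α := by
        unfold hhLoss; rw [if_neg (by linarith), if_neg (by linarith)]
      have e2 : hhLoss (-α) = 0 := by unfold hhLoss; rw [if_pos (by linarith)]
      rw [e1, e2, div_le_iff₀ hs]
      nlinarith [mul_le_mul_of_nonneg_left (show (1:ℝ) ≤ -α by linarith)
        (mul_pos hη₁ hs).le]
    rcases lt_or_ge (1:ℝ) α with h' | h'
    · have e1 : hhLoss α = 0 := by unfold hhLoss; rw [if_pos (by linarith)]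
      have e2 : hhLoss (-α) = α := by
        unfold hhLoss; rw [if_neg (by linarith), if_neg (by linarith)]; ring
      rw [e1, e2, div_le_iff₀ hs]
      nlinarith [mul_le_mul_of_nonneg_left (show (1:ℝ) ≤ α by linarith)
        (mul_pos hη₂ hs).le]
    · have e1 : hhLoss α = (1 - α) ^ 2 / 4 := by
        unfold hhLoss
        rcases eq_or_lt_of_le h' with rfl | h''
        · rw [if_pos le_rfl]; norm_num
        · rw [if_neg (by linarith), if_pos (by linarith)]
      have e2 : hhLoss (-α) = (1 + α) ^ 2 / 4 := by
        unfold hhLoss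
        rcases eq_or_lt_of_le h with rfl | h''
        · rw [if_pos (by norm_num)]; norm_num
        · rw [if_neg (by linarith), if_pos (by linarith)]; ring_nf
      rw [e1, e2, div_le_iff₀ hs]
      nlinarith [sq_nonneg ((η₁ + η₂) * α + η₂ - η₁)]
end

section
/- For the Huberized hinge loss φ and any η₁, η₂ ∈ [0,∞), the identity (η₁-η₂)² = 4(η₁+η₂)·(Q_{η₁,η₂}(0) - inf_α Q_{η₁,η₂}(α)) holds. -/
lemma hhLoss_mid {u : ℝ} (h1 : -1 ≤ u) (h2 : u ≤ 1) : hhLoss u = (1 - u) ^ 2 / 4 := by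
  unfold hhLoss
  split_ifs with h h2
  · have : u = 1 := le_antisymm h2 h
    subst this; norm_num
  · linarith

lemma hhLoss_big {u : ℝ} (h : 1 ≤ u) : hhLoss u = 0 := if_pos h

lemma hhLoss_small {u : ℝ} (h : u < -1) : hhLoss u = -u := by
  unfold hhLoss
  rw [if_neg (by linarith), if_neg (by linarith)]

/-- For the Huberized hinge loss, the comparison identity
`(η₁-η₂)² = 4(η₁+η₂) (Q_{η₁,η₂}(0) - inf_α Q_{η₁,η₂}(α))` holds for all `η₁, η₂ ≥ 0`. -/
theorem stmt_8 (η₁ η₂ : ℝ) (hη₁ : 0 ≤ η₁) (hη₂ : 0 ≤ η₂) (m : ℝ)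
    (hm : IsGLB (Set.range fun α : ℝ => η₁ * hhLoss α + η₂ * hhLoss (-α)) m) :
    (η₁ - η₂) ^ 2
      = 4 * (η₁ + η₂) * ((η₁ * hhLoss 0 + η₂ * hhLoss (-0)) - m) := by
  have h0 : hhLoss 0 = 1/4 := by rw [hhLoss_mid (by norm_num) (by norm_num)]; norm_num
  by_cases hs : η₁ + η₂ = 0
  · have h1 : η₁ = 0 := by linarith
    have h2 : η₂ = 0 := by linarith
    subst h1; subst h2
    simp
  · have hs' : 0 < η₁ + η₂ := lt_of_le_of_ne (by positivity) (Ne.symm hs)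
    set s := η₁ + η₂ with hsdef
    set α₀ : ℝ := (η₁ - η₂) / s with hα₀
    have hα₀1 : -1 ≤ α₀ := by rw [hα₀, le_div_iff₀ hs']; linarith
    have hα₀2 : α₀ ≤ 1 := by rw [hα₀, div_le_iff₀ hs']; linarith
    have hattain : η₁ * hhLoss α₀ + η₂ * hhLoss (-α₀) = η₁ * η₂ / s := by
      rw [hhLoss_mid hα₀1 hα₀2, hhLoss_mid (by linarith) (by linarith), hα₀]
      field_simp
      ring
    have hglb : IsGLB (Set.range fun α : ℝ => η₁ * hhLoss α + η₂ * hhLoss (-α))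
        (η₁ * η₂ / s) := by
      constructor
      · rintro x ⟨α, rfl⟩
        simp only
        rw [div_le_iff₀ hs']
        rcases lt_or_ge 1 α with h | h
        · rw [hhLoss_big h.le, hhLoss_small (by linarith)]
          nlinarith [mul_nonneg hη₂ (by linarith : (0:ℝ) ≤ α - 1), hsdef]
        · rcases le_or_gt (-1) α with h' | h'
          · rw [hhLoss_mid h' h, hhLoss_mid (by linarith) (by linarith)]
            nlinarith [sq_nonneg ((η₁ + η₂) * α + (η₂ - η₁)), hsdef]
          · rw [hhLoss_small h', hhLoss_big (by linarith)]
            nlinarith [mul_nonneg hη₁ (by linarith : (0:ℝ) ≤ -α - 1), hsdef]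
      · intro b hb
        exact hb (Set.mem_range.mpr ⟨α₀, by simpa using hattain⟩)
    have hmv : m = η₁ * η₂ / s := hm.unique hglb
    rw [hmv, neg_zero, h0]
    field_simp
    ring
end

section
/- For any η₁, η₂ ≥ 0, with ΔQ = η₁·log(2η₁/(η₁+η₂)) + η₂·log(2η₂/(η₁+η₂)) (interpreted as 0 when η₁+η₂ = 0, with the convention 0·log 0 = 0), the inequality (η₁-η₂)² ≤ 8(η₁+η₂)·ΔQ holds. -/
/-- For `|x| ≤ 1`, `exp x ≤ 1 + x + (3/4) x²`. -/
lemma exp_quad_bound {x : ℝ} (hx : |x| ≤ 1) :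
    Real.exp x ≤ 1 + x + (3 / 4) * x ^ 2 := by
  have h := Real.exp_bound hx (n := 2) (by norm_num)
  have hsum : ∑ m ∈ Finset.range 2, x ^ m / m.factorial = 1 + x := by
    simp [Finset.sum_range_succ]
  rw [hsum] at h
  have h2 : Real.exp x - (1 + x) ≤ |x| ^ 2 * ((2 : ℕ).succ / ((2 : ℕ).factorial * 2)) :=
    (abs_sub_le_iff.1 h).1
  have hx2 : |x| ^ 2 = x ^ 2 := sq_abs x
  norm_num [hx2] at h2
  nlinarith [h2]

/-- Key tangent-line bound: `a * log (a / b) ≥ a * t + a - b * exp t`. -/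
lemma key_bound (a b t : ℝ) (ha : 0 ≤ a) (hb : 0 < b) :
    a * t + a - b * Real.exp t ≤ a * Real.log (a / b) := by
  rcases eq_or_lt_of_le ha with h | h
  · subst h
    have := Real.exp_pos t
    simp only [zero_mul, zero_add, zero_div, Real.log_zero, mul_zero]
    nlinarith
  · have hx : 0 < b * Real.exp t / a := by positivity
    have hlog := Real.log_le_sub_one_of_pos hx
    have heq : Real.log (b * Real.exp t / a) = Real.log b + t - Real.log a := by
      rw [Real.log_div (by positivity) (ne_of_gt h), Real.log_mul (ne_of_gt hb)
        (ne_of_gt (Real.exp_pos t)), Real.log_exp]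
    rw [heq] at hlog
    have hmul : a * (Real.log b + t - Real.log a) ≤ a * (b * Real.exp t / a - 1) :=
      mul_le_mul_of_nonneg_left hlog (le_of_lt h)
    have hcancel : a * (b * Real.exp t / a - 1) = b * Real.exp t - a := by
      field_simp
    rw [hcancel] at hmul
    have hlogdiv : Real.log (a / b) = Real.log a - Real.log b :=
      Real.log_div (ne_of_gt h) (ne_of_gt hb)
    rw [hlogdiv]
    nlinarith

/-- Comparison inequality for the logistic loss: for all `η₁, η₂ ≥ 0`,
`(η₁-η₂)² ≤ 8(η₁+η₂)(η₁ log(2η₁/(η₁+η₂)) + η₂ log(2η₂/(η₁+η₂)))`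
(with the conventions `log 0 = 0` and `x/0 = 0` handling the degenerate cases). -/
theorem stmt_10 (η₁ η₂ : ℝ) (hη₁ : 0 ≤ η₁) (hη₂ : 0 ≤ η₂) :
    (η₁ - η₂) ^ 2
      ≤ 8 * (η₁ + η₂) *
        (η₁ * Real.log (2 * η₁ / (η₁ + η₂)) + η₂ * Real.log (2 * η₂ / (η₁ + η₂))) := by
  set s := η₁ + η₂ with hs_def
  rcases eq_or_lt_of_le (by positivity : (0:ℝ) ≤ s) with hs | hs
  · -- degenerate case s = 0
    have h1 : η₁ = 0 := by linarith [hs_def ▸ hs]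
    have h2 : η₂ = 0 := by linarith [hs_def ▸ hs]
    simp [h1, h2]
  · set d := η₁ - η₂ with hd_def
    set u := 2 * d / (3 * s) with hu_def
    have hd_abs : |d| ≤ s := by
      rw [abs_le]; constructor <;> simp only [hd_def, hs_def] <;> linarith
    have hu_abs : |u| ≤ 1 := by
      rw [hu_def, abs_div, abs_of_pos (by linarith : (0:ℝ) < 3 * s)]
      rw [div_le_one (by linarith)]
      have : |2 * d| = 2 * |d| := by rw [abs_mul]; norm_num
      rw [this]; linarith
    have hnu_abs : |(-u)| ≤ 1 := by rwa [abs_neg]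
    -- rewrite the logs
    have hr1 : 2 * η₁ / s = η₁ / (s / 2) := by
      rw [div_div_eq_mul_div]; ring_nf
    have hr2 : 2 * η₂ / s = η₂ / (s / 2) := by
      rw [div_div_eq_mul_div]; ring_nf
    have hb : (0:ℝ) < s / 2 := by linarith
    have h1 := key_bound η₁ (s / 2) u hη₁ hb
    have h2 := key_bound η₂ (s / 2) (-u) hη₂ hb
    have he1 := exp_quad_bound hu_abs
    have he2 := exp_quad_bound hnu_abs
    rw [hr1, hr2]
    have hueq : u * (3 * s) = 2 * d := by
      rw [hu_def]; field_simp
    have hb1 := mul_le_mul_of_nonneg_left he1 (le_of_lt hb)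
    have hb2 := mul_le_mul_of_nonneg_left he2 (le_of_lt hb)
    have hDlb : d * u - 3 / 4 * s * u ^ 2 ≤
        η₁ * Real.log (η₁ / (s / 2)) + η₂ * Real.log (η₂ / (s / 2)) := by
      have hde : d * u = η₁ * u + η₂ * (-u) := by rw [hd_def]; ring
      nlinarith [h1, h2, hb1, hb2]
    have hmul := mul_le_mul_of_nonneg_left hDlb (by linarith : (0:ℝ) ≤ 8 * s)
    have hqe : 8 * s * (d * u - 3 / 4 * s * u ^ 2) = 8 / 3 * d ^ 2 := by
      rw [hu_def]; field_simp; ring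
    rw [hqe] at hmul
    nlinarith [sq_nonneg d, hmul]
end

section
/- For the DWD loss φ (defined by φ(u) = 1/u for u ≥ 1 and φ(u) = 2-u for u < 1) and any η₁ > η₂ > 0, the minimum over α ∈ ℝ of Q_{η₁,η₂}(α) = η₁·φ(α) + η₂·φ(-α) equals 2η₂ + 2√(η₁η₂), attained at α* = √(η₁/η₂). -/
/-- The distance weighted discrimination (DWD) loss. -/
noncomputable def dwdLoss (u : ℝ) : ℝ := if 1 ≤ u then 1 / u else 2 - u

lemma amgm_aux (a b t : ℝ) (ha : 0 < a) (hb : 0 < b) (ht : 0 < t) :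
    2 * Real.sqrt (a * b) ≤ a * t + b / t := by
  have key : a * b ≤ ((a * t + b / t) / 2) ^ 2 := by
    have hmul : a * t * (b / t) = a * b := by field_simp
    nlinarith [sq_nonneg (a * t - b / t), hmul]
  have hx : (0:ℝ) ≤ (a * t + b / t) / 2 := by positivity
  have h2 : Real.sqrt (a * b) ≤ (a * t + b / t) / 2 := by
    calc Real.sqrt (a * b) ≤ Real.sqrt (((a * t + b / t) / 2) ^ 2) :=
          Real.sqrt_le_sqrt key
      _ = (a * t + b / t) / 2 := Real.sqrt_sq hx
  linarith

/-- For the DWD loss and any `η₁ > η₂ > 0`, the minimum over `α` of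
`Q_{η₁,η₂}(α) = η₁ φ(α) + η₂ φ(-α)` equals `2η₂ + 2√(η₁η₂)`, attained at
`α* = √(η₁/η₂)`. -/
theorem stmt_11 (η₁ η₂ : ℝ) (hη₂ : 0 < η₂) (hlt : η₂ < η₁) :
    (η₁ * dwdLoss (Real.sqrt (η₁ / η₂)) + η₂ * dwdLoss (-Real.sqrt (η₁ / η₂))
      = 2 * η₂ + 2 * Real.sqrt (η₁ * η₂)) ∧
    ∀ α : ℝ, 2 * η₂ + 2 * Real.sqrt (η₁ * η₂) ≤ η₁ * dwdLoss α + η₂ * dwdLoss (-α) := by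
  have hη₁ : 0 < η₁ := hη₂.trans hlt
  set s := Real.sqrt (η₁ / η₂) with hs
  have hratio : (1:ℝ) ≤ η₁ / η₂ := by
    rw [le_div_iff₀ hη₂]; linarith
  have hs1 : 1 ≤ s := by
    rw [hs, show (1:ℝ) = Real.sqrt 1 by simp]
    exact Real.sqrt_le_sqrt hratio
  have hspos : 0 < s := lt_of_lt_of_le one_pos hs1
  have hs2 : s ^ 2 = η₁ / η₂ := Real.sq_sqrt (by positivity)
  have hsq : η₂ * s ^ 2 = η₁ := by
    rw [hs2]; field_simp
  have hsqrt : Real.sqrt (η₁ * η₂) = η₂ * s := by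
    rw [show η₁ * η₂ = (η₂ * s) ^ 2 by nlinarith]
    exact Real.sqrt_sq (by positivity)
  constructor
  · have h1 : dwdLoss s = 1 / s := by rw [dwdLoss, if_pos hs1]
    have h2 : dwdLoss (-s) = 2 + s := by
      rw [dwdLoss, if_neg (by linarith)]; ring
    rw [h1, h2, hsqrt]
    have hsne : s ≠ 0 := ne_of_gt hspos
    field_simp
    nlinarith
  · intro α
    rcases le_or_gt 1 α with hα | hα
    · -- α ≥ 1
      have hαpos : 0 < α := lt_of_lt_of_le one_pos hα
      have h1 : dwdLoss α = 1 / α := by rw [dwdLoss, if_pos hα]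
      have h2 : dwdLoss (-α) = 2 + α := by
        rw [dwdLoss, if_neg (by linarith)]; ring
      have hkey := amgm_aux η₂ η₁ α hη₂ hη₁ hαpos
      rw [h1, h2, mul_comm η₁ η₂]
      have : η₁ * (1 / α) = η₁ / α := by ring
      nlinarith
    · rcases le_or_gt α (-1) with hα2 | hα2
      · -- α ≤ -1
        have hnegpos : 0 < -α := by linarith
        have h1 : dwdLoss α = 2 - α := by rw [dwdLoss, if_neg (by linarith)]
        have h2 : dwdLoss (-α) = 1 / (-α) := by rw [dwdLoss, if_pos (by linarith)]
        have hkey := amgm_aux η₁ η₂ (-α) hη₁ hη₂ hnegpos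
        rw [h1, h2]
        have hle : Real.sqrt (η₁ * η₂) ≤ η₁ := by
          rw [hsqrt]
          nlinarith
        have : η₂ * (1 / (-α)) = η₂ / (-α) := by ring
        nlinarith
      · -- -1 < α < 1
        have h1 : dwdLoss α = 2 - α := by rw [dwdLoss, if_neg (by linarith)]
        have h2 : dwdLoss (-α) = 2 + α := by
          rw [dwdLoss, if_neg (by linarith)]; ring
        have hle : 2 * Real.sqrt (η₁ * η₂) ≤ η₁ + η₂ := by
          have := amgm_aux η₂ η₁ 1 hη₂ hη₁ one_pos
          rw [mul_comm η₁ η₂]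
          nlinarith
        rw [h1, h2]
        nlinarith
end

section
/- For the DWD loss φ and any η₁, η₂ ∈ [0,∞), the excess conditional risk at zero satisfies Q_{η₁,η₂}(0) - inf_α Q_{η₁,η₂}(α) ≥ |η₁ - η₂|. -/
/-- For the DWD loss and any `η₁, η₂ ≥ 0`, the excess conditional risk at zero satisfies
`Q_{η₁,η₂}(0) - inf_α Q_{η₁,η₂}(α) ≥ |η₁ - η₂|`. -/
theorem stmt_12 (η₁ η₂ : ℝ) (hη₁ : 0 ≤ η₁) (hη₂ : 0 ≤ η₂) (m : ℝ)
    (hm : IsGLB (Set.range fun α : ℝ => η₁ * dwdLoss α + η₂ * dwdLoss (-α)) m) :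
    |η₁ - η₂| ≤ (η₁ * dwdLoss 0 + η₂ * dwdLoss (-0)) - m := by
  have h1 : m ≤ η₁ * dwdLoss 1 + η₂ * dwdLoss (-1) := hm.1 ⟨1, rfl⟩
  have h2 : m ≤ η₁ * dwdLoss (-1) + η₂ * dwdLoss (-(-1)) := hm.1 ⟨-1, rfl⟩
  have e0 : dwdLoss 0 = 2 := by norm_num [dwdLoss]
  have e1 : dwdLoss 1 = 1 := by norm_num [dwdLoss]
  have e2 : dwdLoss (-1) = 3 := by norm_num [dwdLoss]
  rw [neg_zero, e0]
  rw [e1, e2] at h1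
  rw [e2, neg_neg, e1] at h2
  rw [abs_sub_le_iff]
  constructor <;> linarith
end

section
/- Let X be a measurable space with random covariate X, binary treatment A ∈ {+1,-1} with conditional probabilities π(a,x) = P(A=a|X=x) > 0, and real outcome R. For any measurable g: X → ℝ and treatment regime d: X → {+1,-1}, E[(R - g(X))/π(A,X) · 1{A ≠ d(X)}] = E[R/π(A,X) - g(X)] - E[R/π(A,X) · 1{A = d(X)}]. -/
open MeasureTheory Filter Topology

lemma aux_key {𝕏 : Type*} [MeasurableSpace 𝕏] {Ω : Type*} [MeasureSpace Ω]
    [IsProbabilityMeasure (volume : Measure Ω)]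
    (X : Ω → 𝕏) (hX : Measurable X)
    (J : Ω → ℝ) (hJmeas : Measurable J) (hJ0 : ∀ ω, 0 ≤ J ω) (hJ1 : ∀ ω, J ω ≤ 1)
    (p : 𝕏 → ℝ) (hp : Measurable p) (hp0 : ∀ x, 0 ≤ p x)
    (hbase : ∀ h : 𝕏 → ℝ, Measurable h → Integrable (fun ω => h (X ω)) →
      ∫ ω, J ω * h (X ω) = ∫ ω, p (X ω) * h (X ω))
    (φ W : 𝕏 → ℝ) (hφ : Measurable φ) (hW : Integrable (fun ω => W (X ω)))
    (hdom : ∀ x, |p x * φ x| ≤ |W x|) :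
    Integrable (fun ω => J ω * φ (X ω)) ∧
      ∫ ω, J ω * φ (X ω) = ∫ ω, p (X ω) * φ (X ω) := by
  set φn : ℕ → 𝕏 → ℝ := fun n x => max (-(n : ℝ)) (min (n : ℝ) (φ x)) with hφndef
  have hφnmeas : ∀ n, Measurable (φn n) :=
    fun n => measurable_const.max (measurable_const.min hφ)
  have habs_le_n : ∀ n x, |φn n x| ≤ (n : ℝ) := by
    intro n x
    have h0 : (0:ℝ) ≤ n := Nat.cast_nonneg n
    rw [abs_le]
    constructor
    · exact le_max_left _ _
    · exact max_le (by linarith) (min_le_left _ _)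
  have habs_le_φ : ∀ n x, |φn n x| ≤ |φ x| := by
    intro n x
    have h0 : (0:ℝ) ≤ n := Nat.cast_nonneg n
    rw [abs_le]
    constructor
    · exact le_max_of_le_right (le_min (by linarith [neg_abs_le (φ x), abs_nonneg (φ x)])
        (neg_abs_le (φ x)))
    · exact max_le (by linarith [abs_nonneg (φ x)]) (min_le_of_right_le (le_abs_self _))
  have htend : ∀ x, Tendsto (fun n => φn n x) atTop (𝓝 (φ x)) := by
    intro x
    apply tendsto_atTop_of_eventually_const (i₀ := ⌈|φ x|⌉₊)
    intro n hn
    have h1 : |φ x| ≤ (n : ℝ) := le_trans (Nat.le_ceil _) (by exact_mod_cast Nat.cast_le.mpr hn)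
    have h3 : φ x ≤ (n:ℝ) := le_trans (le_abs_self _) h1
    have h4 : -(n:ℝ) ≤ φ x := by linarith [neg_abs_le (φ x)]
    simp [φn, min_eq_right h3, max_eq_right h4]
  have hφnInt : ∀ n, Integrable (fun ω => φn n (X ω)) := by
    intro n
    refine Integrable.mono' (integrable_const (n:ℝ)) (((hφnmeas n).comp hX).aestronglyMeasurable)
      (Filter.Eventually.of_forall fun ω => ?_)
    simpa [Real.norm_eq_abs] using habs_le_n n (X ω)
  have hφnAbsInt : ∀ n, Integrable (fun ω => |φn n (X ω)|) := fun n => (hφnInt n).abs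
  have hbaseAbs : ∀ n, ∫ ω, J ω * |φn n (X ω)| = ∫ ω, p (X ω) * |φn n (X ω)| :=
    fun n => hbase (fun x => |φn n x|) (hφnmeas n).abs (hφnAbsInt n)
  -- integrability of J * φ(X)
  have hJφmeas : Measurable fun ω => J ω * φ (X ω) := hJmeas.mul (hφ.comp hX)
  have hJφnInt : ∀ n, Integrable (fun ω => J ω * φn n (X ω)) := by
    intro n
    refine Integrable.mono' (hφnInt n).abs (hJmeas.mul ((hφnmeas n).comp hX)).aestronglyMeasurable
      (Filter.Eventually.of_forall fun ω => ?_)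
    rw [Real.norm_eq_abs, abs_mul]
    have := hJ1 ω; have := hJ0 ω
    nlinarith [abs_nonneg (φn n (X ω)), abs_of_nonneg (hJ0 ω)]
  have hpφnInt : ∀ n, Integrable (fun ω => p (X ω) * φn n (X ω)) := by
    intro n
    refine Integrable.mono' hW.abs ((hp.comp hX).mul ((hφnmeas n).comp hX)).aestronglyMeasurable
      (Filter.Eventually.of_forall fun ω => ?_)
    rw [Real.norm_eq_abs, abs_mul]
    calc |p (X ω)| * |φn n (X ω)| ≤ |p (X ω)| * |φ (X ω)| :=
          mul_le_mul_of_nonneg_left (habs_le_φ n (X ω)) (abs_nonneg _)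
      _ = |p (X ω) * φ (X ω)| := (abs_mul _ _).symm
      _ ≤ |W (X ω)| := hdom (X ω)
  have hJAbsφnInt : ∀ n, Integrable (fun ω => J ω * |φn n (X ω)|) := by
    intro n
    refine Integrable.mono' (hφnInt n).abs (hJmeas.mul ((hφnmeas n).comp hX).abs).aestronglyMeasurable
      (Filter.Eventually.of_forall fun ω => ?_)
    rw [Real.norm_eq_abs, abs_mul, abs_abs]
    nlinarith [abs_nonneg (φn n (X ω)), abs_of_nonneg (hJ0 ω), hJ1 ω, hJ0 ω]
  have hpAbsφnInt : ∀ n, Integrable (fun ω => p (X ω) * |φn n (X ω)|) := by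
    intro n
    refine Integrable.mono' hW.abs ((hp.comp hX).mul ((hφnmeas n).comp hX).abs).aestronglyMeasurable
      (Filter.Eventually.of_forall fun ω => ?_)
    rw [Real.norm_eq_abs, abs_mul, abs_abs, abs_of_nonneg (hp0 (X ω))]
    calc p (X ω) * |φn n (X ω)| ≤ p (X ω) * |φ (X ω)| :=
          mul_le_mul_of_nonneg_left (habs_le_φ n (X ω)) (hp0 (X ω))
      _ = |p (X ω) * φ (X ω)| := by rw [abs_mul, abs_of_nonneg (hp0 (X ω))]
      _ ≤ |W (X ω)| := hdom (X ω)
  -- bound on truncated integrals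
  set C : ℝ := ∫ ω, |W (X ω)| with hC
  have hboundn : ∀ n, ∫ ω, J ω * |φn n (X ω)| ≤ C := by
    intro n
    rw [hbaseAbs n]
    refine integral_mono (hpAbsφnInt n) hW.abs (fun ω => ?_)
    calc p (X ω) * |φn n (X ω)| ≤ p (X ω) * |φ (X ω)| :=
          mul_le_mul_of_nonneg_left (habs_le_φ n (X ω)) (hp0 (X ω))
      _ = |p (X ω) * φ (X ω)| := by rw [abs_mul, abs_of_nonneg (hp0 (X ω))]
      _ ≤ |W (X ω)| := hdom (X ω)
  have hJφInt : Integrable fun ω => J ω * φ (X ω) := by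
    refine ⟨hJφmeas.aestronglyMeasurable, ?_⟩
    rw [hasFiniteIntegral_iff_norm]
    have hmeasn : ∀ n, Measurable fun ω => ENNReal.ofReal ‖J ω * φn n (X ω)‖ :=
      fun n => (hJmeas.mul ((hφnmeas n).comp hX)).norm.ennreal_ofReal
    have hliminf_eq : ∀ ω, ENNReal.ofReal ‖J ω * φ (X ω)‖
        = liminf (fun n => ENNReal.ofReal ‖J ω * φn n (X ω)‖) atTop := by
      intro ω
      have : Tendsto (fun n => ENNReal.ofReal ‖J ω * φn n (X ω)‖) atTop
          (𝓝 (ENNReal.ofReal ‖J ω * φ (X ω)‖)) := by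
        exact (ENNReal.continuous_ofReal.tendsto _).comp
          ((continuous_norm.tendsto _).comp ((htend (X ω)).const_mul _))
      exact (this.liminf_eq).symm
    calc ∫⁻ ω, ENNReal.ofReal ‖J ω * φ (X ω)‖
        = ∫⁻ ω, liminf (fun n => ENNReal.ofReal ‖J ω * φn n (X ω)‖) atTop :=
          lintegral_congr fun ω => hliminf_eq ω
      _ ≤ liminf (fun n => ∫⁻ ω, ENNReal.ofReal ‖J ω * φn n (X ω)‖) atTop :=
          lintegral_liminf_le hmeasn
      _ ≤ ENNReal.ofReal C := by
          refine liminf_le_of_le (by isBoundedDefault) ?_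
          refine fun b hb => ?_
          obtain ⟨n, hn⟩ := hb.exists
          refine le_trans hn ?_
          have heq : ∫⁻ ω, ENNReal.ofReal ‖J ω * φn n (X ω)‖
              = ENNReal.ofReal (∫ ω, J ω * |φn n (X ω)|) := by
            rw [ofReal_integral_eq_lintegral_ofReal (hJAbsφnInt n)
              (Filter.Eventually.of_forall fun ω => mul_nonneg (hJ0 ω) (abs_nonneg _))]
            refine lintegral_congr fun ω => ?_
            rw [Real.norm_eq_abs, abs_mul, abs_of_nonneg (hJ0 ω)]
          rw [heq]
          exact ENNReal.ofReal_le_ofReal (hboundn n)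
      _ < ⊤ := ENNReal.ofReal_lt_top
  have hpφInt : Integrable fun ω => p (X ω) * φ (X ω) := by
    refine Integrable.mono' hW.abs ((hp.comp hX).mul (hφ.comp hX)).aestronglyMeasurable
      (Filter.Eventually.of_forall fun ω => ?_)
    rw [Real.norm_eq_abs]
    exact hdom (X ω)
  refine ⟨hJφInt, ?_⟩
  have hbasen : ∀ n, ∫ ω, J ω * φn n (X ω) = ∫ ω, p (X ω) * φn n (X ω) :=
    fun n => hbase (φn n) (hφnmeas n) (hφnInt n)
  have T1 : Tendsto (fun n => ∫ ω, J ω * φn n (X ω)) atTop (𝓝 (∫ ω, J ω * φ (X ω))) := by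
    refine tendsto_integral_of_dominated_convergence (fun ω => |J ω * φ (X ω)|)
      (fun n => (hJmeas.mul ((hφnmeas n).comp hX)).aestronglyMeasurable) hJφInt.abs
      (fun n => Filter.Eventually.of_forall fun ω => ?_)
      (Filter.Eventually.of_forall fun ω => ((htend (X ω)).const_mul _))
    show ‖J ω * φn n (X ω)‖ ≤ |J ω * φ (X ω)|
    rw [Real.norm_eq_abs, abs_mul, abs_mul]
    exact mul_le_mul_of_nonneg_left (habs_le_φ n (X ω)) (abs_nonneg _)
  have T2 : Tendsto (fun n => ∫ ω, p (X ω) * φn n (X ω)) atTop (𝓝 (∫ ω, p (X ω) * φ (X ω))) := by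
    refine tendsto_integral_of_dominated_convergence (fun ω => |W (X ω)|)
      (fun n => ((hp.comp hX).mul ((hφnmeas n).comp hX)).aestronglyMeasurable) hW.abs
      (fun n => Filter.Eventually.of_forall fun ω => ?_)
      (Filter.Eventually.of_forall fun ω => ((htend (X ω)).const_mul _))
    show ‖p (X ω) * φn n (X ω)‖ ≤ |W (X ω)|
    rw [Real.norm_eq_abs, abs_mul]
    calc |p (X ω)| * |φn n (X ω)| ≤ |p (X ω)| * |φ (X ω)| :=
          mul_le_mul_of_nonneg_left (habs_le_φ n (X ω)) (abs_nonneg _)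
      _ = |p (X ω) * φ (X ω)| := (abs_mul _ _).symm
      _ ≤ |W (X ω)| := hdom (X ω)
  have T1' : Tendsto (fun n => ∫ ω, p (X ω) * φn n (X ω)) atTop (𝓝 (∫ ω, J ω * φ (X ω))) := by
    refine T1.congr fun n => hbasen n
  exact tendsto_nhds_unique T1' T2


/-- Residual identity: for any measurable `g` and any regime `d`,
`E[(R - g(X))/π(A,X) · 1{A ≠ d(X)}] = E[R/π(A,X) - g(X)] - E[R/π(A,X) · 1{A = d(X)}]`.
Here `π(a,x) = P(A = a | X = x)` is encoded by the hypothesis `hπ` (together with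
`hπsum`), stating that for functions of `X`, the indicator of `A = 1` can be replaced by
`π 1 (X ·)` inside expectations. -/
theorem stmt_15 {𝕏 : Type*} [MeasurableSpace 𝕏] {Ω : Type*} [MeasureSpace Ω]
    [IsProbabilityMeasure (volume : Measure Ω)]
    (X : Ω → 𝕏) (A : Ω → ℝ) (R : Ω → ℝ) (π : ℝ → 𝕏 → ℝ)
    (hX : Measurable X) (hA : Measurable A) (hR : Measurable R)
    (hAval : ∀ ω, A ω = 1 ∨ A ω = -1)
    (hπpos : ∀ a x, (a = 1 ∨ a = -1) → 0 < π a x)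
    (hπmeas : ∀ a, Measurable (π a))
    (hπsum : ∀ x, π 1 x + π (-1) x = 1)
    (hπ : ∀ h : 𝕏 → ℝ, Measurable h → Integrable (fun ω => h (X ω)) →
      (∫ ω, (if A ω = 1 then (1:ℝ) else 0) * h (X ω))
        = ∫ ω, π 1 (X ω) * h (X ω))
    (g : 𝕏 → ℝ) (hg : Measurable g) (hgInt : Integrable fun ω => g (X ω))
    (d : 𝕏 → ℝ) (hd : Measurable d) (hdval : ∀ x, d x = 1 ∨ d x = -1)
    (hRπInt : Integrable fun ω => R ω / π (A ω) (X ω)) :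
    (∫ ω, (R ω - g (X ω)) / π (A ω) (X ω) * (if A ω ≠ d (X ω) then (1:ℝ) else 0))
      = (∫ ω, R ω / π (A ω) (X ω) - g (X ω))
        - ∫ ω, R ω / π (A ω) (X ω) * (if A ω = d (X ω) then (1:ℝ) else 0) := by
  -- indicators of treatment
  set I1 : Ω → ℝ := fun ω => if A ω = 1 then (1:ℝ) else 0 with hI1def
  set I2 : Ω → ℝ := fun ω => if A ω = -1 then (1:ℝ) else 0 with hI2def
  have hSetA1 : MeasurableSet {ω | A ω = 1} := hA (measurableSet_singleton 1)
  have hSetA2 : MeasurableSet {ω | A ω = -1} := hA (measurableSet_singleton (-1))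
  have hI1meas : Measurable I1 := Measurable.ite hSetA1 measurable_const measurable_const
  have hI2meas : Measurable I2 := Measurable.ite hSetA2 measurable_const measurable_const
  have hI10 : ∀ ω, 0 ≤ I1 ω := fun ω => by simp only [hI1def]; split <;> norm_num
  have hI11 : ∀ ω, I1 ω ≤ 1 := fun ω => by simp only [hI1def]; split <;> norm_num
  have hI20 : ∀ ω, 0 ≤ I2 ω := fun ω => by simp only [hI2def]; split <;> norm_num
  have hI21 : ∀ ω, I2 ω ≤ 1 := fun ω => by simp only [hI2def]; split <;> norm_num
  have hπ1pos : ∀ x, 0 < π 1 x := fun x => hπpos 1 x (Or.inl rfl)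
  have hπ2pos : ∀ x, 0 < π (-1) x := fun x => hπpos (-1) x (Or.inr rfl)
  have hπ1lt : ∀ x, π 1 x ≤ 1 := fun x => by linarith [hπsum x, hπ2pos x]
  have hπ2lt : ∀ x, π (-1) x ≤ 1 := fun x => by linarith [hπsum x, hπ1pos x]
  -- the base identity for I2
  have hbase2 : ∀ h : 𝕏 → ℝ, Measurable h → Integrable (fun ω => h (X ω)) →
      ∫ ω, I2 ω * h (X ω) = ∫ ω, π (-1) (X ω) * h (X ω) := by
    intro h hmeas hint
    have hI1h : Integrable fun ω => I1 ω * h (X ω) := by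
      refine Integrable.mono' hint.abs (hI1meas.mul (hmeas.comp hX)).aestronglyMeasurable
        (Filter.Eventually.of_forall fun ω => ?_)
      show ‖I1 ω * h (X ω)‖ ≤ |h (X ω)|
      rw [Real.norm_eq_abs, abs_mul]
      nlinarith [abs_nonneg (h (X ω)), abs_of_nonneg (hI10 ω), hI11 ω, hI10 ω]
    have hπ1h : Integrable fun ω => π 1 (X ω) * h (X ω) := by
      refine Integrable.mono' hint.abs (((hπmeas 1).comp hX).mul (hmeas.comp hX)).aestronglyMeasurable
        (Filter.Eventually.of_forall fun ω => ?_)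
      show ‖π 1 (X ω) * h (X ω)‖ ≤ |h (X ω)|
      rw [Real.norm_eq_abs, abs_mul]
      nlinarith [abs_nonneg (h (X ω)), abs_of_nonneg (hπ1pos (X ω)).le, hπ1lt (X ω),
        (hπ1pos (X ω)).le]
    have e1 : ∀ ω, I2 ω * h (X ω) = h (X ω) - I1 ω * h (X ω) := by
      intro ω
      rcases hAval ω with h1 | h1 <;> simp [hI1def, hI2def, h1] <;> norm_num
    have e2 : ∀ ω, π (-1) (X ω) * h (X ω) = h (X ω) - π 1 (X ω) * h (X ω) := by
      intro ω
      have hs := hπsum (X ω)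
      have h2 : π (-1) (X ω) = 1 - π 1 (X ω) := by linarith
      rw [h2]; ring
    calc ∫ ω, I2 ω * h (X ω) = ∫ ω, (h (X ω) - I1 ω * h (X ω)) := by
          exact integral_congr_ae (Filter.Eventually.of_forall e1)
      _ = (∫ ω, h (X ω)) - ∫ ω, I1 ω * h (X ω) := integral_sub hint hI1h
      _ = (∫ ω, h (X ω)) - ∫ ω, π 1 (X ω) * h (X ω) := by rw [hπ h hmeas hint]
      _ = ∫ ω, (h (X ω) - π 1 (X ω) * h (X ω)) := (integral_sub hint hπ1h).symm
      _ = ∫ ω, π (-1) (X ω) * h (X ω) :=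
          integral_congr_ae (Filter.Eventually.of_forall fun ω => (e2 ω).symm)
  -- the two pieces of the g-part
  set φ1 : 𝕏 → ℝ := fun x => (if d x = -1 then (1:ℝ) else 0) * (g x / π 1 x) with hφ1def
  set φ2 : 𝕏 → ℝ := fun x => (if d x = 1 then (1:ℝ) else 0) * (g x / π (-1) x) with hφ2def
  have hφ1meas : Measurable φ1 :=
    (Measurable.ite (hd (measurableSet_singleton (-1))) measurable_const measurable_const).mul
      (hg.div (hπmeas 1))
  have hφ2meas : Measurable φ2 :=
    (Measurable.ite (hd (measurableSet_singleton 1)) measurable_const measurable_const).mul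
      (hg.div (hπmeas (-1)))
  have hdom1 : ∀ x, |π 1 x * φ1 x| ≤ |g x| := by
    intro x
    have hne : π 1 x ≠ 0 := (hπ1pos x).ne'
    have : π 1 x * φ1 x = (if d x = -1 then (1:ℝ) else 0) * g x := by
      simp only [hφ1def]; field_simp
    rw [this, abs_mul]
    split <;> simp [abs_nonneg]
  have hdom2 : ∀ x, |π (-1) x * φ2 x| ≤ |g x| := by
    intro x
    have hne : π (-1) x ≠ 0 := (hπ2pos x).ne'
    have : π (-1) x * φ2 x = (if d x = 1 then (1:ℝ) else 0) * g x := by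
      simp only [hφ2def]; field_simp
    rw [this, abs_mul]
    split <;> simp [abs_nonneg]
  have K1 := aux_key X hX I1 hI1meas hI10 hI11 (π 1) (hπmeas 1) (fun x => (hπ1pos x).le)
    hπ φ1 g hφ1meas hgInt hdom1
  have K2 := aux_key X hX I2 hI2meas hI20 hI21 (π (-1)) (hπmeas (-1)) (fun x => (hπ2pos x).le)
    hbase2 φ2 g hφ2meas hgInt hdom2
  -- the g-part integrates to ∫ g(X)
  have hgpart : ∫ ω, (I1 ω * φ1 (X ω) + I2 ω * φ2 (X ω)) = ∫ ω, g (X ω) := by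
    rw [integral_add K1.1 K2.1, K1.2, K2.2]
    have hπφ1 : ∀ x, π 1 x * φ1 x = (if d x = -1 then (1:ℝ) else 0) * g x := by
      intro x
      have hne : π 1 x ≠ 0 := (hπ1pos x).ne'
      simp only [hφ1def]; field_simp
    have hπφ2 : ∀ x, π (-1) x * φ2 x = (if d x = 1 then (1:ℝ) else 0) * g x := by
      intro x
      have hne : π (-1) x ≠ 0 := (hπ2pos x).ne'
      simp only [hφ2def]; field_simp
    have hind1 : Integrable fun ω => (if d (X ω) = -1 then (1:ℝ) else 0) * g (X ω) := by
      refine Integrable.mono' hgInt.abs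
        (((Measurable.ite (hd (measurableSet_singleton (-1))) measurable_const
          measurable_const).comp hX).mul (hg.comp hX)).aestronglyMeasurable
        (Filter.Eventually.of_forall fun ω => ?_)
      show ‖(if d (X ω) = -1 then (1:ℝ) else 0) * g (X ω)‖ ≤ |g (X ω)|
      rw [Real.norm_eq_abs, abs_mul]
      split <;> simp [abs_nonneg]
    have hind2 : Integrable fun ω => (if d (X ω) = 1 then (1:ℝ) else 0) * g (X ω) := by
      refine Integrable.mono' hgInt.abs
        (((Measurable.ite (hd (measurableSet_singleton 1)) measurable_const
          measurable_const).comp hX).mul (hg.comp hX)).aestronglyMeasurable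
        (Filter.Eventually.of_forall fun ω => ?_)
      show ‖(if d (X ω) = 1 then (1:ℝ) else 0) * g (X ω)‖ ≤ |g (X ω)|
      rw [Real.norm_eq_abs, abs_mul]
      split <;> simp [abs_nonneg]
    calc (∫ ω, π 1 (X ω) * φ1 (X ω)) + ∫ ω, π (-1) (X ω) * φ2 (X ω)
        = (∫ ω, (if d (X ω) = -1 then (1:ℝ) else 0) * g (X ω))
          + ∫ ω, (if d (X ω) = 1 then (1:ℝ) else 0) * g (X ω) := by
          rw [integral_congr_ae (Filter.Eventually.of_forall fun ω => hπφ1 (X ω)),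
            integral_congr_ae (Filter.Eventually.of_forall fun ω => hπφ2 (X ω))]
      _ = ∫ ω, ((if d (X ω) = -1 then (1:ℝ) else 0) * g (X ω)
          + (if d (X ω) = 1 then (1:ℝ) else 0) * g (X ω)) := (integral_add hind1 hind2).symm
      _ = ∫ ω, g (X ω) := by
          refine integral_congr_ae (Filter.Eventually.of_forall fun ω => ?_)
          rcases hdval (X ω) with h1 | h1 <;> simp [h1] <;> norm_num
  -- decomposition of π (A ω) (X ω)
  have hpA : ∀ ω, π (A ω) (X ω) = if A ω = 1 then π 1 (X ω) else π (-1) (X ω) := by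
    intro ω
    rcases hAval ω with h1 | h1 <;> rw [h1] <;> norm_num
  have hmeasRpA : Measurable fun ω => R ω / π (A ω) (X ω) := by
    have : (fun ω => R ω / π (A ω) (X ω))
        = fun ω => R ω / (if A ω = 1 then π 1 (X ω) else π (-1) (X ω)) :=
      funext fun ω => by rw [hpA ω]
    rw [this]
    exact hR.div (Measurable.ite hSetA1 ((hπmeas 1).comp hX) ((hπmeas (-1)).comp hX))
  have hSetAd : MeasurableSet {ω | A ω = d (X ω)} := measurableSet_eq_fun hA (hd.comp hX)
  have hRd_int : Integrable fun ω => R ω / π (A ω) (X ω)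
      * (if A ω = d (X ω) then (1:ℝ) else 0) := by
    refine Integrable.mono' hRπInt.abs
      (hmeasRpA.mul (Measurable.ite hSetAd measurable_const measurable_const)).aestronglyMeasurable
      (Filter.Eventually.of_forall fun ω => ?_)
    show ‖R ω / π (A ω) (X ω) * (if A ω = d (X ω) then (1:ℝ) else 0)‖ ≤ |R ω / π (A ω) (X ω)|
    rw [Real.norm_eq_abs, abs_mul]
    split <;> simp [abs_nonneg]
  -- pointwise identity for the integrand
  have key : ∀ ω, (R ω - g (X ω)) / π (A ω) (X ω) * (if A ω ≠ d (X ω) then (1:ℝ) else 0)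
      = (R ω / π (A ω) (X ω) - R ω / π (A ω) (X ω) * (if A ω = d (X ω) then (1:ℝ) else 0))
        - (I1 ω * φ1 (X ω) + I2 ω * φ2 (X ω)) := by
    intro ω
    have hne1 : π 1 (X ω) ≠ 0 := (hπ1pos (X ω)).ne'
    have hne2 : π (-1) (X ω) ≠ 0 := (hπ2pos (X ω)).ne'
    rcases hAval ω with h1 | h1 <;> rcases hdval (X ω) with h2 | h2 <;>
      simp only [hI1def, hI2def, hφ1def, hφ2def, h1, h2, hpA ω] <;> norm_num <;>
      field_simp <;> ring
  -- assemble
  have hL : (∫ ω, (R ω - g (X ω)) / π (A ω) (X ω) * (if A ω ≠ d (X ω) then (1:ℝ) else 0))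
      = ((∫ ω, R ω / π (A ω) (X ω))
          - ∫ ω, R ω / π (A ω) (X ω) * (if A ω = d (X ω) then (1:ℝ) else 0))
        - ∫ ω, g (X ω) := by
    have hIntA : Integrable fun ω => R ω / π (A ω) (X ω)
        - R ω / π (A ω) (X ω) * (if A ω = d (X ω) then (1:ℝ) else 0) := hRπInt.sub hRd_int
    have hIntB : Integrable fun ω => I1 ω * φ1 (X ω) + I2 ω * φ2 (X ω) := K1.1.add K2.1
    rw [integral_congr_ae (Filter.Eventually.of_forall key),
      integral_sub hIntA hIntB, integral_sub hRπInt hRd_int, hgpart]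
  have hM : (∫ ω, R ω / π (A ω) (X ω) - g (X ω))
      = (∫ ω, R ω / π (A ω) (X ω)) - ∫ ω, g (X ω) := integral_sub hRπInt hgInt
  rw [hL, hM]
  ring
end

section
/- Let (X, A, R) be a random triple with A ∈ {+1,-1}, π(a,x) = P(A=a|X=x) > 0, and let R̃ = R - g̃(X) for measurable g̃. For any regime d: X → {+1,-1}, E[|R̃|/π(A,X) · 1{A·sign(R̃) ≠ d(X)}] = E[R̃/π(A,X) · 1{A ≠ d(X)}] + E[max(-R̃,0)/π(A,X)]. -/
open MeasureTheory

/-- Reflection identity: with residual `R̃ = R - gtil(X)` and `sign r = 1` if `r > 0`,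
`-1` otherwise,
`E[|R̃|/π(A,X) · 1{A·sign(R̃) ≠ d(X)}] = E[R̃/π(A,X) · 1{A ≠ d(X)}] + E[max(-R̃,0)/π(A,X)]`. -/
theorem stmt_16 {𝕏 : Type*} [MeasurableSpace 𝕏] {Ω : Type*} [MeasureSpace Ω]
    [IsProbabilityMeasure (volume : Measure Ω)]
    (X : Ω → 𝕏) (A : Ω → ℝ) (R : Ω → ℝ) (π : ℝ → 𝕏 → ℝ)
    (hX : Measurable X) (hA : Measurable A) (hR : Measurable R)
    (hAval : ∀ ω, A ω = 1 ∨ A ω = -1)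
    (hπpos : ∀ a x, (a = 1 ∨ a = -1) → 0 < π a x)
    (hπmeas : ∀ a, Measurable (π a))
    (gtil : 𝕏 → ℝ) (hg : Measurable gtil)
    (d : 𝕏 → ℝ) (hd : Measurable d) (hdval : ∀ x, d x = 1 ∨ d x = -1)
    (hInt1 : Integrable fun ω =>
      (R ω - gtil (X ω)) / π (A ω) (X ω) * (if A ω ≠ d (X ω) then (1:ℝ) else 0))
    (hInt2 : Integrable fun ω => max (-(R ω - gtil (X ω))) 0 / π (A ω) (X ω)) :
    (∫ ω, |R ω - gtil (X ω)| / π (A ω) (X ω) *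
        (if A ω * (if 0 < R ω - gtil (X ω) then (1:ℝ) else -1) ≠ d (X ω) then (1:ℝ) else 0))
      = (∫ ω, (R ω - gtil (X ω)) / π (A ω) (X ω) * (if A ω ≠ d (X ω) then (1:ℝ) else 0))
        + ∫ ω, max (-(R ω - gtil (X ω))) 0 / π (A ω) (X ω) := by
  have key : ∀ ω, |R ω - gtil (X ω)| / π (A ω) (X ω) *
        (if A ω * (if 0 < R ω - gtil (X ω) then (1:ℝ) else -1) ≠ d (X ω) then (1:ℝ) else 0)
      = (R ω - gtil (X ω)) / π (A ω) (X ω) * (if A ω ≠ d (X ω) then (1:ℝ) else 0)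
        + max (-(R ω - gtil (X ω))) 0 / π (A ω) (X ω) := by
    intro ω
    by_cases hpos : 0 < R ω - gtil (X ω)
    · rw [if_pos hpos, abs_of_pos hpos, mul_one,
        max_eq_right (by linarith : -(R ω - gtil (X ω)) ≤ 0), zero_div, add_zero]
    · rw [if_neg hpos]
      have hle := not_lt.1 hpos
      rw [abs_of_nonpos hle, max_eq_left (by linarith : (0:ℝ) ≤ -(R ω - gtil (X ω)))]
      rcases hAval ω with ha | ha <;> rcases hdval (X ω) with hd' | hd' <;>
        rw [ha, hd'] <;> norm_num <;> ring
  calc (∫ ω, |R ω - gtil (X ω)| / π (A ω) (X ω) *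
        (if A ω * (if 0 < R ω - gtil (X ω) then (1:ℝ) else -1) ≠ d (X ω) then (1:ℝ) else 0))
      = ∫ ω, ((R ω - gtil (X ω)) / π (A ω) (X ω) * (if A ω ≠ d (X ω) then (1:ℝ) else 0)
        + max (-(R ω - gtil (X ω))) 0 / π (A ω) (X ω)) := by
        exact integral_congr_ae (Filter.Eventually.of_forall key)
    _ = _ := integral_add hInt1 hInt2
end
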